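/- arXiv:2403.03474 — 7 statements merged into one kernel-verified Lean document; each statement's English description precedes it below -/
import Mathlib

section
/- Let X_1 ⊆ J(10,3) be a part of a perfect 2-coloring with quotient matrix [[12,9],[9,12]]. For any five distinct elements a,b,c,d,e ∈ {1,...,10}, writing ab* for the set of all 3-subsets containing {a,b}, and x̄ = 1 if the 3-subset x is in X_1 and 0 otherwise, and S̄ = |S ∩ X_1| for a set S of 3-subsets, we have: (ab*)̄ − (ac*)̄ = 3( {a,b,d}̄ + {a,b,e}̄ + {c,d,e}̄ − {a,c,d}̄ − {a,c,e}̄ − {b,d,e}̄ ). -/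
/-! For a vertex `v = {x, y, z}` of `J(10,3)`, the stars `xy*`, `xz*`, `yz*` all contain `v`, and
every neighbour of `v` lies in exactly one of them. Hence, in a perfect coloring,
`|xy* ∩ X₁| + |xz* ∩ X₁| + |yz* ∩ X₁| = 3 v̄ + (12 v̄ + 9 (1 - v̄)) = 6 v̄ + 9`.
Adding these identities for `abd`, `abe`, `cde` and subtracting them for `acd`, `ace`, `bde`,
every star other than `ab*` and `ac*` cancels. -/

/-- The Johnson graph `J(n,k)`: vertices are the `k`-element subsets of an
`n`-element set, two vertices adjacent when their intersection has `k-1` elements. -/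
def johnsonGraph (n k : ℕ) : SimpleGraph {s : Finset (Fin n) // s.card = k} where
  Adj x y := (x.1 ∩ y.1).card = k - 1 ∧ x ≠ y
  symm := by
    constructor
    intro x y h
    exact ⟨by rw [Finset.inter_comm]; exact h.1, h.2.symm⟩
  loopless := by
    constructor
    intro x h
    exact h.2 rfl

instance (n k : ℕ) : DecidableRel (johnsonGraph n k).Adj :=
  fun x y => inferInstanceAs (Decidable ((x.1 ∩ y.1).card = k - 1 ∧ x ≠ y))

/-- A perfect 2-coloring of a finite graph `G` with quotient matrix
`[[p11, p12], [p21, p22]]`: a partition of the vertices into nonempty parts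
`X1`, `X2` such that every vertex of `Xi` has exactly `p i j` neighbors in `Xj`. -/
def IsPerfect2Coloring {V : Type*} [Fintype V] [DecidableEq V]
    (G : SimpleGraph V) [DecidableRel G.Adj] (X1 X2 : Finset V)
    (p11 p12 p21 p22 : ℕ) : Prop :=
  X1 ∪ X2 = Finset.univ ∧ Disjoint X1 X2 ∧ X1.Nonempty ∧ X2.Nonempty ∧
  (∀ v ∈ X1, (G.neighborFinset v ∩ X1).card = p11 ∧
             (G.neighborFinset v ∩ X2).card = p12) ∧
  (∀ v ∈ X2, (G.neighborFinset v ∩ X1).card = p21 ∧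
             (G.neighborFinset v ∩ X2).card = p22)

/-- `ab*`: the set of vertices of `J(10,3)` (3-subsets of `{0,…,9}`) containing
both `a` and `b`. -/
def star (a b : Fin 10) : Finset {s : Finset (Fin 10) // s.card = 3} :=
  Finset.univ.filter (fun v => a ∈ v.1 ∧ b ∈ v.1)

/-- The indicator (as an integer) of whether the 3-subset `s` belongs to the
part `X1` of the coloring. -/
def ind (X1 : Finset {s : Finset (Fin 10) // s.card = 3})
    (s : Finset (Fin 10)) : ℤ :=
  (X1.filter (fun v => v.1 = s)).card

section Triples

variable {α : Type*} [DecidableEq α] {x y z : α}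

lemma pairwise_ne_of_card_eq_five {a b c d e : α}
    (h : ({a, b, c, d, e} : Finset α).card = 5) :
    a ≠ b ∧ a ≠ c ∧ a ≠ d ∧ a ≠ e ∧ b ≠ c ∧ b ≠ d ∧ b ≠ e ∧ c ≠ d ∧ c ≠ e ∧ d ≠ e := by
  have hnd : ({a, b, c, d, e} : Multiset α).Nodup := by
    rw [← Multiset.toFinset_card_eq_card_iff_nodup]
    simpa using h
  simpa [not_or, and_assoc] using hnd

lemma card_triple_inter (hxy : x ≠ y) (hxz : x ≠ z) (hyz : y ≠ z) (w : Finset α) :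
    ({x, y, z} ∩ w).card =
      (if x ∈ w then 1 else 0) + (if y ∈ w then 1 else 0) + (if z ∈ w then 1 else 0) := by
  rw [← Finset.filter_mem_eq_inter, Finset.card_filter, Finset.sum_insert (by simp [hxy, hxz]),
    Finset.sum_insert (by simp [hyz]), Finset.sum_singleton, add_assoc]

lemma triple_eq_iff (hxy : x ≠ y) (hxz : x ≠ z) (hyz : y ≠ z) {w : Finset α}
    (hw : w.card = 3) : {x, y, z} = w ↔ x ∈ w ∧ y ∈ w ∧ z ∈ w := by
  refine ⟨by rintro rfl; simp, fun ⟨hx, hy, hz⟩ => Finset.eq_of_subset_of_card_le ?_ ?_⟩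
  · simp [Finset.insert_subset_iff, hx, hy, hz]
  · rw [hw, Finset.card_eq_three.mpr ⟨x, y, z, hxy, hxz, hyz, rfl⟩]

lemma ite_pair_mem_add_add (hxy : x ≠ y) (hxz : x ≠ z) (hyz : y ≠ z) {w : Finset α}
    (hw : w.card = 3) :
    (if x ∈ w ∧ y ∈ w then 1 else 0) + (if x ∈ w ∧ z ∈ w then 1 else 0) +
        (if y ∈ w ∧ z ∈ w then 1 else 0) =
      3 * (if {x, y, z} = w then 1 else 0) +
        (if ({x, y, z} ∩ w).card = 2 ∧ {x, y, z} ≠ w then 1 else 0) := by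
  simp only [card_triple_inter hxy hxz hyz, ne_eq, triple_eq_iff hxy hxz hyz hw]
  by_cases hx : x ∈ w <;> by_cases hy : y ∈ w <;> by_cases hz : z ∈ w <;> simp [hx, hy, hz]

end Triples

lemma IsPerfect2Coloring.card_neighborFinset_inter_left {V : Type*} [Fintype V] [DecidableEq V]
    {G : SimpleGraph V} [DecidableRel G.Adj] {X1 X2 : Finset V} {p11 p12 p21 p22 : ℕ}
    (h : IsPerfect2Coloring G X1 X2 p11 p12 p21 p22) (v : V) :
    (G.neighborFinset v ∩ X1).card = if v ∈ X1 then p11 else p21 := by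
  obtain ⟨hcover, -, -, -, h1, h2⟩ := h
  split_ifs with hv
  · exact (h1 v hv).1
  · exact (h2 v ((Finset.mem_union.mp (hcover ▸ Finset.mem_univ v)).resolve_left hv)).1

lemma johnsonGraph_card_filter_pair_mem_add_add {n : ℕ}
    (X : Finset {s : Finset (Fin n) // s.card = 3})
    (v : {s : Finset (Fin n) // s.card = 3}) {x y z : Fin n}
    (hxy : x ≠ y) (hxz : x ≠ z) (hyz : y ≠ z) (hv : v.1 = {x, y, z}) :
    (X.filter fun w => x ∈ w.1 ∧ y ∈ w.1).card + (X.filter fun w => x ∈ w.1 ∧ z ∈ w.1).card +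
        (X.filter fun w => y ∈ w.1 ∧ z ∈ w.1).card =
      3 * (if v ∈ X then 1 else 0) + ((johnsonGraph n 3).neighborFinset v ∩ X).card := by
  rw [Finset.inter_comm, ← Finset.filter_mem_eq_inter, ← Finset.sum_ite_eq' X v (fun _ => 1)]
  simp only [Finset.card_filter, SimpleGraph.mem_neighborFinset, Finset.mul_sum,
    ← Finset.sum_add_distrib]
  refine Finset.sum_congr rfl fun w _ => ?_
  have hadj : (johnsonGraph n 3).Adj v w ↔ ({x, y, z} ∩ w.1).card = 2 ∧ {x, y, z} ≠ w.1 := by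
    change (v.1 ∩ w.1).card = 2 ∧ v ≠ w ↔ _
    rw [Ne, Subtype.ext_iff, hv]
  simp only [hadj, ite_pair_mem_add_add hxy hxz hyz w.2, Subtype.ext_iff, hv, eq_comm]

lemma star_inter (a b : Fin 10) (X : Finset {s : Finset (Fin 10) // s.card = 3}) :
    star a b ∩ X = X.filter fun w => a ∈ w.1 ∧ b ∈ w.1 := by
  rw [_root_.star, Finset.filter_inter, Finset.univ_inter]

lemma ind_eq (X : Finset {s : Finset (Fin 10) // s.card = 3})
    (v : {s : Finset (Fin 10) // s.card = 3}) :
    ind X v.1 = if v ∈ X then 1 else 0 := by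
  rw [ind, Finset.filter_congr fun w _ => Subtype.ext_iff.symm, Finset.filter_eq']
  split_ifs <;> simp

lemma IsPerfect2Coloring.card_star_inter_add_add
    {X1 X2 : Finset {s : Finset (Fin 10) // s.card = 3}} {p11 p12 p21 p22 : ℕ}
    (h : IsPerfect2Coloring (johnsonGraph 10 3) X1 X2 p11 p12 p21 p22)
    {x y z : Fin 10} (hxy : x ≠ y) (hxz : x ≠ z) (hyz : y ≠ z) :
    ((star x y ∩ X1).card + (star x z ∩ X1).card + (star y z ∩ X1).card : ℤ) =
      ((p11 : ℤ) + 3 - p21) * ind X1 {x, y, z} + p21 := by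
  let v : {s : Finset (Fin 10) // s.card = 3} :=
    ⟨{x, y, z}, Finset.card_eq_three.mpr ⟨x, y, z, hxy, hxz, hyz, rfl⟩⟩
  have hcount := johnsonGraph_card_filter_pair_mem_add_add X1 v hxy hxz hyz rfl
  rw [h.card_neighborFinset_inter_left] at hcount
  rw [star_inter, star_inter, star_inter, show ({x, y, z} : Finset (Fin 10)) = v.1 from rfl,
    ind_eq]
  split_ifs at hcount ⊢ <;> zify at hcount <;> linarith

theorem lemma1_J103
    (X1 X2 : Finset {s : Finset (Fin 10) // s.card = 3})
    (h : IsPerfect2Coloring (johnsonGraph 10 3) X1 X2 12 9 9 12)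
    (a b c d e : Fin 10)
    (hdist : ({a, b, c, d, e} : Finset (Fin 10)).card = 5) :
    ((star a b ∩ X1).card : ℤ) - ((star a c ∩ X1).card : ℤ) =
      3 * (ind X1 {a, b, d} + ind X1 {a, b, e} + ind X1 {c, d, e}
           - ind X1 {a, c, d} - ind X1 {a, c, e} - ind X1 {b, d, e}) := by
  obtain ⟨hab, hac, had, hae, -, hbd, hbe, hcd, hce, hde⟩ := pairwise_ne_of_card_eq_five hdist
  have abd := h.card_star_inter_add_add hab had hbd
  have abe := h.card_star_inter_add_add hab hae hbe
  have cde := h.card_star_inter_add_add hcd hce hde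
  have acd := h.card_star_inter_add_add hac had hcd
  have ace := h.card_star_inter_add_add hac hae hce
  have bde := h.card_star_inter_add_add hbd hbe hde
  push_cast at abd abe cde acd ace bde
  linarith
end

section
/- Let {X_1, X_2} be a perfect 2-coloring of J(10,3) with quotient matrix [[12,9],[9,12]]. Then for any pairs {a,b} and {c,d} of distinct elements of {1,...,10}, |ab* ∩ X_1| ≡ |cd* ∩ X_1| (mod 3). -/
/-! For a 3-set `v = {a, b, c}`, a vertex `w` lies in exactly `C(|v ∩ w|, 2)` of the stars
`ab*, ac*, bc*`: three times if `w = v`, once if `w` is a neighbour of `v`, never otherwise.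
Hence `|ab* ∩ X₁| + |ac* ∩ X₁| + |bc* ∩ X₁|` is `12 + 3` or `9`, so divisible by `3`.
On four points these triangle relations combine to `2 f(xz) ≡ 2 f(yw) (mod 3)`, and any
two pairs are linked through a pair disjoint from both (there are `10 ≥ 6` points). -/

open Finset

lemma ite_pairs_add_eq_choose_card_inter {α : Type*} [DecidableEq α] {a b c : α}
    (hab : a ≠ b) (hac : a ≠ c) (hbc : b ≠ c) (w : Finset α) :
    ((if a ∈ w ∧ b ∈ w then 1 else 0) + (if a ∈ w ∧ c ∈ w then 1 else 0) +
      (if b ∈ w ∧ c ∈ w then 1 else 0)) = (#({a, b, c} ∩ w)).choose 2 := by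
  by_cases ha : a ∈ w <;> by_cases hb : b ∈ w <;> by_cases hc : c ∈ w <;>
    simp [insert_inter_of_mem, insert_inter_of_notMem, ha, hb, hc, hab, hac, hbc]

section JohnsonThree

variable {n : ℕ}

lemma johnsonGraph_three_card_inter_eq_three_iff {v w : {s : Finset (Fin n) // s.card = 3}} :
    #(v.1 ∩ w.1) = 3 ↔ v = w := by
  refine ⟨fun h => Subtype.ext ?_, fun h => by rw [h, inter_self, w.2]⟩
  have hv := eq_of_subset_of_card_le inter_subset_left (h.trans v.2.symm).ge
  have hw := eq_of_subset_of_card_le inter_subset_right (h.trans w.2.symm).ge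
  rw [← hv, hw]

lemma johnsonGraph_three_choose_card_inter (v w : {s : Finset (Fin n) // s.card = 3}) :
    (#(v.1 ∩ w.1)).choose 2 =
      (if (johnsonGraph n 3).Adj v w then 1 else 0) + (if v = w then 3 else 0) := by
  by_cases hvw : v = w
  · subst hvw
    simp [v.2]
  · have hlt : #(v.1 ∩ w.1) < 3 :=
      lt_of_le_of_ne ((card_le_card inter_subset_left).trans v.2.le)
        (johnsonGraph_three_card_inter_eq_three_iff.not.mpr hvw)
    have hadj : (johnsonGraph n 3).Adj v w ↔ #(v.1 ∩ w.1) = 2 :=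
      ⟨And.left, fun h => ⟨h, hvw⟩⟩
    simp only [hadj, hvw, if_false, add_zero]
    interval_cases #(v.1 ∩ w.1) <;> rfl

lemma johnsonGraph_three_sum_card_filter_pairs (X : Finset {s : Finset (Fin n) // s.card = 3})
    {a b c : Fin n} (hab : a ≠ b) (hac : a ≠ c) (hbc : b ≠ c)
    (v : {s : Finset (Fin n) // s.card = 3}) (hv : v.1 = {a, b, c}) :
    #(X.filter fun w => a ∈ w.1 ∧ b ∈ w.1) + #(X.filter fun w => a ∈ w.1 ∧ c ∈ w.1) +
        #(X.filter fun w => b ∈ w.1 ∧ c ∈ w.1) =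
      #((johnsonGraph n 3).neighborFinset v ∩ X) + if v ∈ X then 3 else 0 := by
  have hN : (johnsonGraph n 3).neighborFinset v ∩ X = X.filter ((johnsonGraph n 3).Adj v) := by
    ext w; simp [and_comm]
  simp only [card_filter, ← sum_add_distrib, hN]
  rw [← sum_ite_eq X v (fun _ => 3), ← sum_add_distrib]
  refine sum_congr rfl fun w _ => ?_
  rw [ite_pairs_add_eq_choose_card_inter hab hac hbc, ← hv, johnsonGraph_three_choose_card_inter]

lemma IsPerfect2Coloring.johnsonGraph_three_sum_card_filter_pairs_modEq_zero
    {X1 X2 : Finset {s : Finset (Fin n) // s.card = 3}} {p11 p12 p21 p22 : ℕ}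
    (h : IsPerfect2Coloring (johnsonGraph n 3) X1 X2 p11 p12 p21 p22)
    (h11 : 3 ∣ p11) (h21 : 3 ∣ p21) {a b c : Fin n} (hab : a ≠ b) (hac : a ≠ c) (hbc : b ≠ c) :
    #(X1.filter fun w => a ∈ w.1 ∧ b ∈ w.1) + #(X1.filter fun w => a ∈ w.1 ∧ c ∈ w.1) +
        #(X1.filter fun w => b ∈ w.1 ∧ c ∈ w.1) ≡ 0 [MOD 3] := by
  obtain ⟨hcover, -, -, -, hX1, hX2⟩ := h
  let v : {s : Finset (Fin n) // s.card = 3} :=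
    ⟨{a, b, c}, card_eq_three.mpr ⟨a, b, c, hab, hac, hbc, rfl⟩⟩
  rw [johnsonGraph_three_sum_card_filter_pairs X1 hab hac hbc v rfl]
  by_cases hv : v ∈ X1
  · rw [(hX1 v hv).1, if_pos hv]
    exact Nat.modEq_zero_iff_dvd.mpr (dvd_add h11 (dvd_refl 3))
  · have hv2 : v ∈ X2 := (mem_union.mp (hcover ▸ mem_univ v)).resolve_left hv
    rw [(hX2 v hv2).1, if_neg hv, add_zero]
    exact Nat.modEq_zero_iff_dvd.mpr h21

end JohnsonThree

lemma modEq_of_triangle_sums_modEq_zero {α : Type*} [Fintype α] [DecidableEq α]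
    (hα : 6 ≤ Fintype.card α) (f : α → α → ℕ)
    (hf : ∀ x y z, x ≠ y → x ≠ z → y ≠ z → f x y + f x z + f y z ≡ 0 [MOD 3])
    {a b c d : α} (hab : a ≠ b) (hcd : c ≠ d) : f a b ≡ f c d [MOD 3] := by
  have quad : ∀ x y z w, x ≠ y → x ≠ z → x ≠ w → y ≠ z → y ≠ w → z ≠ w →
      f x z ≡ f y w [MOD 3] := by
    intro x y z w hxy hxz hxw hyz hyw hzw
    have t1 := hf x y z hxy hxz hyz
    have t2 := hf x y w hxy hxw hyw
    have t3 := hf x z w hxz hxw hzw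
    have t4 := hf y z w hyz hyw hzw
    unfold Nat.ModEq at *
    omega
  have hfresh : 1 < #({a, b, c, d}ᶜ : Finset α) := by
    rw [card_compl]
    have := card_le_four (a := a) (b := b) (c := c) (d := d)
    omega
  obtain ⟨p, hp, q, hq, hpq⟩ := one_lt_card.mp hfresh
  simp only [mem_compl, mem_insert, mem_singleton, not_or] at hp hq
  obtain ⟨hpa, hpb, hpc, hpd⟩ := hp
  obtain ⟨hqa, hqb, hqc, hqd⟩ := hq
  exact (quad a p b q (Ne.symm hpa) hab (Ne.symm hqa) hpb hpq (Ne.symm hqb)).trans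
    (quad c p d q (Ne.symm hpc) hcd (Ne.symm hqc) hpd hpq (Ne.symm hqd)).symm

lemma star_inter_eq_filter (a b : Fin 10) (X : Finset {s : Finset (Fin 10) // s.card = 3}) :
    _root_.star a b ∩ X = X.filter fun w => a ∈ w.1 ∧ b ∈ w.1 := by
  rw [_root_.star, filter_inter, univ_inter]

theorem type_well_defined_J103
    (X1 X2 : Finset {s : Finset (Fin 10) // s.card = 3})
    (h : IsPerfect2Coloring (johnsonGraph 10 3) X1 X2 12 9 9 12)
    (a b c d : Fin 10) (hab : a ≠ b) (hcd : c ≠ d) :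
    (star a b ∩ X1).card % 3 = (star c d ∩ X1).card % 3 := by
  refine modEq_of_triangle_sums_modEq_zero (by simp) (fun x y => #(star x y ∩ X1))
    (fun x y z hxy hxz hyz => ?_) hab hcd
  simp only [star_inter_eq_filter]
  exact h.johnsonGraph_three_sum_card_filter_pairs_modEq_zero (by norm_num) (by norm_num) hxy hxz hyz
end

section
/- Let Γ be the 10-cycle with vertex set {1,...,10} and let d denote graph distance in the cycle. Define A = { {a,b,c} : distances between pairs are {1,1,2} }, B = { {a,b,c} : {1,2,3} }, C = { {a,b,c} : {1,3,4} }, H = { {a,b,c} : {3,3,4} }, and let P_1 = A ∪ B ∪ C ∪ H, P_2 = complement of P_1 in the 3-subsets of {1,...,10}. Then {P_1, P_2} is a perfect 2-coloring of J(10,3) with quotient matrix [[12,9],[9,12]]. -/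
/-- Graph distance in the 10-cycle on `Fin 10`. -/
def cdist (x y : Fin 10) : ℕ :=
  min ((x.val + 10 - y.val) % 10) ((y.val + 10 - x.val) % 10)

/-- The multiset of pairwise cycle-distances of a subset of `Fin 10`. -/
def dtype (s : Finset (Fin 10)) : Multiset ℕ :=
  ((s ×ˢ s).filter (fun p : Fin 10 × Fin 10 => p.1 < p.2)).val.map
    (fun p => cdist p.1 p.2)

/-! Rotations of the 10-cycle preserve cycle distances, hence distance types, and act on `J(10,3)`
by automorphisms. So both color classes are unions of rotation orbits, and the numbers of
neighbors of a vertex in each class depend only on its orbit. Every 3-subset can be rotated to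
contain `0`, and for the 36 vertices containing `0` the counts are checked by computation. -/

open Finset

def johnsonGraph.mapPerm {n k : ℕ} (σ : Equiv.Perm (Fin n)) :
    johnsonGraph n k ≃g johnsonGraph n k where
  toEquiv := σ.finsetCongr.subtypeEquiv fun s => by simp
  map_rel_iff' := by
    simp [johnsonGraph, ← map_inter, Subtype.ext_iff]

lemma johnsonGraph.mapPerm_symm_apply_val {n k : ℕ} (σ : Equiv.Perm (Fin n))
    (v : {s : Finset (Fin n) // s.card = k}) :
    ((johnsonGraph.mapPerm σ).symm v).1 = v.1.map σ.symm.toEmbedding := rfl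

lemma SimpleGraph.Iso.card_neighborFinset_inter {V : Type*} [Fintype V] [DecidableEq V]
    {G : SimpleGraph V} [DecidableRel G.Adj] (φ : G ≃g G) {X : Finset V}
    (hX : ∀ w, φ w ∈ X ↔ w ∈ X) (v : V) :
    #(G.neighborFinset (φ v) ∩ X) = #(G.neighborFinset v ∩ X) := by
  conv_rhs => rw [← card_map (φ : V ≃ V).toEmbedding]
  congr 1
  ext w
  simp only [mem_map, mem_inter, SimpleGraph.mem_neighborFinset, Equiv.coe_toEmbedding]
  constructor
  · rintro ⟨hadj, hw⟩
    refine ⟨φ.symm w, ⟨?_, ?_⟩, φ.apply_symm_apply w⟩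
    · rwa [← φ.map_adj_iff, φ.apply_symm_apply]
    · rwa [← hX, φ.apply_symm_apply]
  · rintro ⟨u, ⟨hadj, hu⟩, rfl⟩
    exact ⟨φ.map_adj_iff.mpr hadj, (hX u).mpr hu⟩

lemma johnsonGraph.card_neighborFinset_inter_filter {n k : ℕ} (hk : 0 < k)
    (v : {s : Finset (Fin n) // s.card = k}) (q : Finset (Fin n) → Prop) [DecidablePred q] :
    #((johnsonGraph n k).neighborFinset v ∩ univ.filter fun w => q w.1) =
      #((univ.powersetCard k).filter fun t => #(v.1 ∩ t) = k - 1 ∧ q t) := by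
  rw [← card_map (Function.Embedding.subtype _)]
  congr 1
  ext t
  simp only [mem_map, mem_inter, mem_filter, mem_univ, true_and, SimpleGraph.mem_neighborFinset,
    mem_powersetCard, subset_univ, Function.Embedding.subtype_apply]
  constructor
  · rintro ⟨w, ⟨⟨hcard, -⟩, hq⟩, rfl⟩
    exact ⟨w.2, hcard, hq⟩
  · rintro ⟨ht, hcard, hq⟩
    refine ⟨⟨t, ht⟩, ⟨⟨hcard, ?_⟩, hq⟩, rfl⟩
    rintro rfl
    rw [inter_self, ht] at hcard
    omega

lemma cdist_comm (x y : Fin 10) : cdist x y = cdist y x :=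
  min_comm _ _

lemma cdist_add_right (x y a : Fin 10) : cdist (x + a) (y + a) = cdist x y := by
  simp only [cdist, Fin.val_add]
  omega

/-- `dtype` lists each unordered pair once, through its increasing representative; doubling it
removes the dependence on the order of `Fin 10`, which isometries of the cycle do not preserve. -/
lemma dtype_add_dtype (s : Finset (Fin 10)) :
    dtype s + dtype s = s.offDiag.val.map fun p => cdist p.1 p.2 := by
  set L := (s ×ˢ s).filter fun p : Fin 10 × Fin 10 => p.1 < p.2
  have hdisj : Disjoint L (L.map (Equiv.prodComm _ _).toEmbedding) := by
    simp only [L, disjoint_left, mem_map_equiv, mem_filter, mem_product]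
    grind
  have hsplit : s.offDiag = L.disjUnion _ hdisj := by
    ext p
    simp only [L, mem_offDiag, mem_disjUnion, mem_map_equiv, mem_filter, mem_product]
    grind
  rw [hsplit, disjUnion_val, Multiset.map_add, map_val, Multiset.map_map]
  congr 1
  exact Multiset.map_congr rfl fun p _ => cdist_comm _ _

lemma dtype_map_of_isometry (f : Fin 10 ↪ Fin 10) (hf : ∀ x y, cdist (f x) (f y) = cdist x y)
    (s : Finset (Fin 10)) : dtype (s.map f) = dtype s := by
  have hoff : (s.map f).offDiag = s.offDiag.map (f.prodMap f) := by
    ext ⟨a, b⟩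
    simp only [mem_offDiag, mem_map, Function.Embedding.coe_prodMap, Prod.exists, Prod.map,
      Prod.mk.injEq]
    grind
  have h : dtype (s.map f) + dtype (s.map f) = dtype s + dtype s := by
    rw [dtype_add_dtype, dtype_add_dtype, hoff, map_val, Multiset.map_map]
    exact Multiset.map_congr rfl fun p _ => hf _ _
  ext n
  have := congrArg (Multiset.count n) h
  simp only [Multiset.count_add] at this
  omega

def IsFirstColor (s : Finset (Fin 10)) : Prop :=
  dtype s = {1, 1, 2} ∨ dtype s = {1, 2, 3} ∨ dtype s = {1, 3, 4} ∨ dtype s = {3, 3, 4}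

instance : DecidablePred IsFirstColor := fun s => by unfold IsFirstColor; infer_instance

lemma isFirstColor_map_addRight (a : Fin 10) (s : Finset (Fin 10)) :
    IsFirstColor (s.map (Equiv.addRight a).toEmbedding) ↔ IsFirstColor s := by
  rw [IsFirstColor, IsFirstColor, dtype_map_of_isometry _ fun x y => cdist_add_right x y a]

abbrev firstClass : Finset {s : Finset (Fin 10) // s.card = 3} :=
  univ.filter fun v => IsFirstColor v.1

def neighborCounts (v : {s : Finset (Fin 10) // s.card = 3}) : ℕ × ℕ :=
  (#((johnsonGraph 10 3).neighborFinset v ∩ firstClass),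
    #((johnsonGraph 10 3).neighborFinset v ∩ firstClassᶜ))

lemma neighborCounts_of_zero_mem (v : {s : Finset (Fin 10) // s.card = 3}) (hv : 0 ∈ v.1) :
    neighborCounts v = if IsFirstColor v.1 then (12, 9) else (9, 12) := by
  rw [neighborCounts, compl_filter,
    johnsonGraph.card_neighborFinset_inter_filter three_pos v IsFirstColor,
    johnsonGraph.card_neighborFinset_inter_filter three_pos v fun s => ¬IsFirstColor s]
  revert v
  decide +kernel

def cycleRotation (a : Fin 10) : johnsonGraph 10 3 ≃g johnsonGraph 10 3 :=
  johnsonGraph.mapPerm (Equiv.addRight a)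

lemma isFirstColor_cycleRotation (a : Fin 10) (v : {s : Finset (Fin 10) // s.card = 3}) :
    IsFirstColor (cycleRotation a v).1 ↔ IsFirstColor v.1 :=
  isFirstColor_map_addRight a v.1

lemma neighborCounts_cycleRotation (a : Fin 10) (v : {s : Finset (Fin 10) // s.card = 3}) :
    neighborCounts (cycleRotation a v) = neighborCounts v := by
  have hX (w) : cycleRotation a w ∈ firstClass ↔ w ∈ firstClass := by
    simpa using isFirstColor_cycleRotation a w
  rw [neighborCounts, neighborCounts, (cycleRotation a).card_neighborFinset_inter hX,
    (cycleRotation a).card_neighborFinset_inter fun w => by rw [mem_compl, mem_compl, hX]]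

lemma neighborCounts_eq (v : {s : Finset (Fin 10) // s.card = 3}) :
    neighborCounts v = if IsFirstColor v.1 then (12, 9) else (9, 12) := by
  obtain ⟨a, ha⟩ : v.1.Nonempty := card_pos.mp (by rw [v.2]; exact three_pos)
  have h0 : 0 ∈ ((cycleRotation a).symm v).1 := by
    simpa [cycleRotation, johnsonGraph.mapPerm_symm_apply_val] using ha
  rw [← (cycleRotation a).apply_symm_apply v, neighborCounts_cycleRotation,
    neighborCounts_of_zero_mem _ h0]
  simp only [isFirstColor_cycleRotation]

theorem orbit_construction_first_coloring :
    IsPerfect2Coloring (johnsonGraph 10 3)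
      (Finset.univ.filter (fun v : {s : Finset (Fin 10) // s.card = 3} =>
        dtype v.1 = {1, 1, 2} ∨ dtype v.1 = {1, 2, 3} ∨
        dtype v.1 = {1, 3, 4} ∨ dtype v.1 = {3, 3, 4}))
      (Finset.univ.filter (fun v : {s : Finset (Fin 10) // s.card = 3} =>
        dtype v.1 = {1, 1, 2} ∨ dtype v.1 = {1, 2, 3} ∨
        dtype v.1 = {1, 3, 4} ∨ dtype v.1 = {3, 3, 4}))ᶜ
      12 9 9 12 := by
  change IsPerfect2Coloring _ firstClass firstClassᶜ 12 9 9 12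
  refine ⟨union_compl _, disjoint_compl_right, ⟨⟨{0, 1, 2}, rfl⟩, by decide⟩,
    ⟨⟨{0, 1, 5}, rfl⟩, by decide⟩, fun v hv => ?_, fun v hv => ?_⟩
  · have h := neighborCounts_eq v
    rw [if_pos (mem_filter.mp hv).2] at h
    exact Prod.ext_iff.mp h
  · have h := neighborCounts_eq v
    rw [if_neg fun h' => mem_compl.mp hv (mem_filter.mpr ⟨mem_univ v, h'⟩)] at h
    exact Prod.ext_iff.mp h
end

section
/- Partition the twenty 3-subsets of {1,...,6} into ten pairs {v, v^c} of complementary sets. Any partition of J(6,3) into two parts, each of which is a union of five of these complementary pairs, is a perfect 2-coloring with quotient matrix [[4,5],[5,4]]. -/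
/-!
For `w ∉ {v, vᶜ}` we have `#(v ∩ w) ∈ {1, 2}` and `#(v ∩ wᶜ) = 3 - #(v ∩ w)`, so
exactly one of `w`, `wᶜ` is adjacent to `v` in `J(6,3)`. Hence every complementary pair
other than `{v, vᶜ}` contributes exactly one neighbour of `v`, and a union of five pairs
contains `4` neighbours of `v` if it contains `v` and `5` otherwise.
-/

open Finset

theorem Finset.card_eq_two_mul_card_inter_of_involutive {α : Type*} [DecidableEq α]
    {c : α → α} (hc : Function.Involutive c) {S T : Finset α}
    (hS : ∀ w ∈ S, c w ∈ S) (hT : ∀ w ∈ S, (w ∈ T ↔ c w ∉ T)) :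
    #S = 2 * #(S ∩ T) := by
  have hswap : #(S \ T) = #(S ∩ T) := by
    refine card_nbij' c c ?_ ?_ (fun w _ ↦ hc w) (fun w _ ↦ hc w)
    · intro w hw
      simp only [coe_sdiff, Set.mem_sdiff, mem_coe] at hw
      simp only [coe_inter, Set.mem_inter_iff, mem_coe]
      exact ⟨hS w hw.1, not_not.mp fun h ↦ hw.2 ((hT w hw.1).mpr h)⟩
    · intro w hw
      simp only [coe_inter, Set.mem_inter_iff, mem_coe] at hw
      simp only [coe_sdiff, Set.mem_sdiff, mem_coe]
      exact ⟨hS w hw.1, (hT w hw.1).mp hw.2⟩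
  rw [← card_sdiff_add_card_inter S T, hswap, two_mul]

namespace JohnsonSixThree

abbrev Vertex := {s : Finset (Fin 6) // s.card = 3}

def antipode (v : Vertex) : Vertex :=
  ⟨v.1ᶜ, by rw [card_compl, v.2]; rfl⟩

theorem antipode_involutive : Function.Involutive antipode :=
  fun v ↦ Subtype.ext (compl_compl v.1)

theorem antipode_ne (v : Vertex) : antipode v ≠ v := by
  intro h
  have := congrArg (fun s : Vertex ↦ #(v.1 ∩ s.1)) h
  simp [antipode, v.2] at this

theorem adj_iff (v w : Vertex) :
    (johnsonGraph 6 3).Adj v w ↔ #(v.1 ∩ w.1) = 2 ∧ v ≠ w := Iff.rfl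

theorem card_inter_antipode (v w : Vertex) :
    #(v.1 ∩ (antipode w).1) = 3 - #(v.1 ∩ w.1) := by
  have := card_inter_add_card_sdiff v.1 w.1
  rw [sdiff_eq_inter_compl] at this
  simp only [antipode]
  omega

theorem card_inter_eq_one_or_two {v w : Vertex} (hv : w ≠ v) (hav : w ≠ antipode v) :
    #(v.1 ∩ w.1) = 1 ∨ #(v.1 ∩ w.1) = 2 := by
  have hle : #(v.1 ∩ w.1) ≤ 3 := (card_le_card inter_subset_left).trans_eq v.2
  have hne3 : #(v.1 ∩ w.1) ≠ 3 := by
    intro h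
    have hvw : v.1 ∩ w.1 = v.1 := eq_of_subset_of_card_le inter_subset_left (by rw [h, v.2])
    exact hv (Subtype.ext (eq_of_subset_of_card_le (inter_eq_left.mp hvw)
      (by rw [v.2, w.2])).symm)
  have hne0 : #(v.1 ∩ w.1) ≠ 0 := by
    intro h
    have hsub : w.1 ⊆ v.1ᶜ :=
      subset_compl_iff_disjoint_left.mpr (disjoint_iff_inter_eq_empty.mpr (card_eq_zero.mp h))
    exact hav (Subtype.ext (eq_of_subset_of_card_le hsub (by rw [(antipode v).2, w.2])))
  omega

theorem adj_iff_not_adj_antipode {v w : Vertex} (hv : w ≠ v) (hav : w ≠ antipode v) :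
    (johnsonGraph 6 3).Adj v w ↔ ¬(johnsonGraph 6 3).Adj v (antipode w) := by
  have hvaw : v ≠ antipode w := fun h ↦ hav (by rw [h, antipode_involutive])
  rw [adj_iff, adj_iff, card_inter_antipode]
  rcases card_inter_eq_one_or_two hv hav with h | h <;> simp [h, hvaw, Ne.symm hv]

theorem antipode_notMem_neighborFinset (v : Vertex) :
    antipode v ∉ (johnsonGraph 6 3).neighborFinset v := by
  rw [SimpleGraph.mem_neighborFinset, adj_iff, card_inter_antipode]
  simp [v.2]

theorem card_sdiff_antipodal_pair_eq_two_mul_card_neighborFinset_inter {S : Finset Vertex}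
    (hS : ∀ w ∈ S, antipode w ∈ S) (v : Vertex) :
    #(S \ {v, antipode v}) = 2 * #((johnsonGraph 6 3).neighborFinset v ∩ S) := by
  set N := (johnsonGraph 6 3).neighborFinset v
  have hN : N ∩ S = (S \ {v, antipode v}) ∩ N := by
    ext w
    have hwv : w ∈ N → w ≠ v := fun h hwv ↦
      SimpleGraph.notMem_neighborFinset_self _ v (hwv ▸ h)
    have hwav : w ∈ N → w ≠ antipode v := fun h hwav ↦
      antipode_notMem_neighborFinset v (hwav ▸ h)
    simp only [mem_inter, mem_sdiff, mem_insert, mem_singleton, not_or]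
    tauto
  rw [hN]
  refine card_eq_two_mul_card_inter_of_involutive antipode_involutive ?_ ?_
  · simp only [mem_sdiff, mem_insert, mem_singleton, not_or]
    rintro w ⟨hw, hwv, hwav⟩
    refine ⟨hS w hw, fun h ↦ hwav ?_, fun h ↦ hwv (antipode_involutive.injective h)⟩
    rw [← h, antipode_involutive]
  · simp only [mem_sdiff, mem_insert, mem_singleton, not_or]
    rintro w ⟨-, hwv, hwav⟩
    simpa only [N, SimpleGraph.mem_neighborFinset] using adj_iff_not_adj_antipode hwv hwav

theorem card_eq_two_mul_card_neighborFinset_inter_of_notMem {S : Finset Vertex}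
    (hS : ∀ w ∈ S, antipode w ∈ S) {v : Vertex} (hv : v ∉ S) :
    #S = 2 * #((johnsonGraph 6 3).neighborFinset v ∩ S) := by
  have hav : antipode v ∉ S := fun h ↦ hv (antipode_involutive v ▸ hS _ h)
  rw [← card_sdiff_antipodal_pair_eq_two_mul_card_neighborFinset_inter hS,
    sdiff_eq_self_of_disjoint (by simp [hv, hav])]

theorem card_eq_two_mul_card_neighborFinset_inter_add_two_of_mem {S : Finset Vertex}
    (hS : ∀ w ∈ S, antipode w ∈ S) {v : Vertex} (hv : v ∈ S) :
    #S = 2 * #((johnsonGraph 6 3).neighborFinset v ∩ S) + 2 := by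
  have hpair : {v, antipode v} ⊆ S := insert_subset hv (singleton_subset_iff.mpr (hS v hv))
  have hcard : #{v, antipode v} = 2 := card_pair (antipode_ne v).symm
  have := card_le_card hpair
  rw [← card_sdiff_antipodal_pair_eq_two_mul_card_neighborFinset_inter hS,
    card_sdiff_of_subset hpair]
  omega

end JohnsonSixThree

open JohnsonSixThree

/-- Any partition of `J(6,3)` into two parts, each of which is a union of five
pairs of complementary 3-subsets, is a perfect 2-coloring with quotient
matrix `[[4,5],[5,4]]`. -/
theorem antipodal_pairs_perfect_coloring
    (X1 : Finset {s : Finset (Fin 6) // s.card = 3})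
    (hcard : X1.card = 10)
    (hcompl : ∀ v ∈ X1, ∀ w : {s : Finset (Fin 6) // s.card = 3},
      w.1 = v.1ᶜ → w ∈ X1) :
    IsPerfect2Coloring (johnsonGraph 6 3) X1 X1ᶜ 4 5 5 4 := by
  have hX1 : ∀ w ∈ X1, antipode w ∈ X1 := fun w hw ↦ hcompl w hw _ rfl
  have hX2 : ∀ w ∈ X1ᶜ, antipode w ∈ X1ᶜ := by
    simp only [mem_compl]
    exact fun w hw h ↦ hw (antipode_involutive w ▸ hX1 _ h)
  have hcard2 : #X1ᶜ = 10 := by simp [card_compl, hcard, Nat.choose]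
  refine ⟨union_compl X1, disjoint_compl_right, card_pos.mp (by omega),
    card_pos.mp (by omega), fun v hv ↦ ?_, fun v hv ↦ ?_⟩
  · have h1 := card_eq_two_mul_card_neighborFinset_inter_add_two_of_mem hX1 hv
    have h2 := card_eq_two_mul_card_neighborFinset_inter_of_notMem hX2 (notMem_compl.mpr hv)
    omega
  · have h1 := card_eq_two_mul_card_neighborFinset_inter_of_notMem hX1 (mem_compl.mp hv)
    have h2 := card_eq_two_mul_card_neighborFinset_inter_add_two_of_mem hX2 hv
    omega
end

section
/- Let X_1 = { {1,5,6}, {1,4,5}, {1,4,6}, {1,3,4}, {3,4,6}, {2,3,4}, {2,3,6}, {2,3,5}, {2,5,6}, {1,2,5} } ⊆ J(6,3). The stabilizer in the symmetric group S_6 (acting on 3-subsets of {1,...,6}) of the set X_1 has order 10 and is isomorphic to the dihedral group of order 10. -/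
open Pointwise

/-- The coloring part `X₁ = {156, 145, 146, 134, 346, 234, 236, 235, 256, 125}`
as a family of 3-subsets, with `{1,…,6}` identified with `Fin 6` (so `6` is `0`). -/
def X1 : Finset (Finset (Fin 6)) :=
  {{1, 5, 6}, {1, 4, 5}, {1, 4, 6}, {1, 3, 4}, {3, 4, 6},
   {2, 3, 4}, {2, 3, 6}, {2, 3, 5}, {2, 5, 6}, {1, 2, 5}}

/-- A 5-cycle `(1 2 4 5 3)` stabilizing `X1`. -/
def ρ : Equiv.Perm (Fin 6) := ⟨![0,2,4,1,5,3], ![0,3,1,5,2,4], by decide, by decide⟩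

/-- The involution `(2 3)(4 5)` stabilizing `X1`. -/
def τ : Equiv.Perm (Fin 6) := ⟨![0,1,3,2,5,4], ![0,1,3,2,5,4], by decide, by decide⟩

/-- The embedding of the dihedral group of order 10 into `S₆`. -/
def f : DihedralGroup 5 → Equiv.Perm (Fin 6)
  | .r i => ρ ^ i.val
  | .sr i => τ * ρ ^ i.val

lemma f_mul : ∀ a b : DihedralGroup 5, f (a * b) = f a * f b := by decide

lemma f_inj : Function.Injective f := by decide

lemma smul_eq_iff (σ : Equiv.Perm (Fin 6)) : σ • X1 = X1 ↔ ∀ s ∈ X1, σ • s ∈ X1 := by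
  constructor
  · intro h s hs
    rw [← h]
    exact Finset.smul_mem_smul_finset hs
  · intro h
    apply Finset.eq_of_subset_of_card_le
    · intro t ht
      rw [Finset.mem_smul_finset] at ht
      obtain ⟨s, hs, rfl⟩ := ht
      exact h s hs
    · rw [Finset.card_smul_finset]

set_option maxHeartbeats 4000000 in
set_option maxRecDepth 100000 in
lemma key : ∀ σ : Equiv.Perm (Fin 6),
    (∀ s ∈ X1, σ • s ∈ X1) ↔ ∃ d : DihedralGroup 5, f d = σ := by decide

/-- `f` as a monoid hom. -/
def F : DihedralGroup 5 →* Equiv.Perm (Fin 6) := MonoidHom.mk' f f_mul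

lemma stab_eq_range : MulAction.stabilizer (Equiv.Perm (Fin 6)) X1 = F.range := by
  ext σ
  rw [MulAction.mem_stabilizer_iff, smul_eq_iff, key, MonoidHom.mem_range]
  rfl

noncomputable def e : (MulAction.stabilizer (Equiv.Perm (Fin 6)) X1) ≃* DihedralGroup 5 :=
  ((MulEquiv.subgroupCongr stab_eq_range).trans
    (MonoidHom.ofInjective (f := F) f_inj).symm)

/-- The stabilizer of `X₁` under the action of `S₆` on families of 3-subsets
has order 10 and is dihedral of order 10. -/
theorem stabilizer_X1_dihedral_of_order_ten :
    Nat.card (MulAction.stabilizer (Equiv.Perm (Fin 6)) X1) = 10 ∧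
    Nonempty ((MulAction.stabilizer (Equiv.Perm (Fin 6)) X1) ≃* DihedralGroup 5) := by
  refine ⟨?_, ⟨e⟩⟩
  rw [Nat.card_congr e.toEquiv, Nat.card_eq_fintype_card]
  decide
end

section
/- Let {X_1, X_2} be a perfect 2-coloring of J(10,3) with quotient matrix [[12,9],[9,12]], and suppose X_1 has type 0 (i.e., |ab* ∩ X_1| ≡ 0 mod 3 for all distinct a,b). Then for every abc ∈ X_1, the three counts of X_1-neighbors of abc containing {a,b}, {a,c}, {b,c} respectively form the multiset {2,5,5}. -/
/-- The number of neighbors of `v` lying in `X1` that contain both `a` and `b`. -/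
def rowCount (X1 : Finset {s : Finset (Fin 10) // s.card = 3})
    (v : {s : Finset (Fin 10) // s.card = 3}) (a b : Fin 10) : ℕ :=
  (X1.filter (fun w => (johnsonGraph 10 3).Adj v w ∧ a ∈ w.1 ∧ b ∈ w.1)).card

/-!
Every vertex of `ab*` other than `abc` is adjacent to `abc`, so the number of `X₁`-neighbours of
`abc` containing `{a, b}` is `|ab* ∩ X₁| - 1`: it is `≡ 2 (mod 3)` and at most `|ab*| - 1 = 7`,
hence `2` or `5`. Each neighbour of `abc` contains exactly one of the three pairs, so the three
counts sum to `12`, which forces them to be `2, 5, 5`.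
-/

open Finset

theorem Finset.card_inter_lt_of_card_eq_of_ne {α : Type*} [DecidableEq α] {s t : Finset α}
    (hst : s.card = t.card) (hne : s ≠ t) : (s ∩ t).card < s.card := by
  refine card_lt_card (ssubset_of_subset_of_ne inter_subset_left fun h => hne ?_)
  exact eq_of_subset_of_card_le (inter_eq_left.mp h) hst.ge

theorem Finset.card_triple_inter {α : Type*} [DecidableEq α] (t : Finset α) {a b c : α}
    (hab : a ≠ b) (hac : a ≠ c) (hbc : b ≠ c) :
    ({a, b, c} ∩ t).card =
      (if a ∈ t then 1 else 0) + (if b ∈ t then 1 else 0) + (if c ∈ t then 1 else 0) := by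
  rw [← filter_mem_eq_inter, card_filter, sum_insert (by simp [hab, hac]),
    sum_insert (by simp [hbc]), sum_singleton, add_assoc]

section Johnson

variable {n : ℕ}

theorem johnsonGraph_three_adj_of_mem_of_mem {v w : {s : Finset (Fin n) // s.card = 3}}
    {a b : Fin n} (hab : a ≠ b) (hav : a ∈ v.1) (hbv : b ∈ v.1) (haw : a ∈ w.1) (hbw : b ∈ w.1)
    (hne : v ≠ w) : (johnsonGraph n 3).Adj v w := by
  have hpair : 2 ≤ (v.1 ∩ w.1).card := by
    rw [← card_pair hab]
    exact card_le_card (insert_subset (mem_inter.mpr ⟨hav, haw⟩) (by simp [hbv, hbw]))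
  have hlt : (v.1 ∩ w.1).card < v.1.card :=
    card_inter_lt_of_card_eq_of_ne (v.2.trans w.2.symm) (fun h => hne (Subtype.ext h))
  rw [v.2] at hlt
  exact ⟨by omega, hne⟩

/-- A neighbour of `abc` contains exactly one of the pairs `{a, b}`, `{a, c}`, `{b, c}`. -/
theorem johnsonGraph_three_adj_pair_indicator_sum {v w : {s : Finset (Fin n) // s.card = 3}}
    {a b c : Fin n} (habc : v.1 = {a, b, c}) (hab : a ≠ b) (hac : a ≠ c) (hbc : b ≠ c)
    (hadj : (johnsonGraph n 3).Adj v w) :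
    ((if a ∈ w.1 ∧ b ∈ w.1 then 1 else 0) + (if a ∈ w.1 ∧ c ∈ w.1 then 1 else 0)
      + (if b ∈ w.1 ∧ c ∈ w.1 then 1 else 0) : ℕ) = 1 := by
  have hcard : (v.1 ∩ w.1).card = 2 := hadj.1
  rw [habc, card_triple_inter w.1 hab hac hbc] at hcard
  split_ifs at hcard ⊢ <;> simp_all

end Johnson

theorem mem_star {a b : Fin 10} {w : {s : Finset (Fin 10) // s.card = 3}} :
    w ∈ star a b ↔ a ∈ w.1 ∧ b ∈ w.1 := by
  simp [_root_.star]

theorem rowCount_add_one (X : Finset {s : Finset (Fin 10) // s.card = 3})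
    {v : {s : Finset (Fin 10) // s.card = 3}} (hv : v ∈ X) {a b : Fin 10} (hab : a ≠ b)
    (ha : a ∈ v.1) (hb : b ∈ v.1) : rowCount X v a b + 1 = (star a b ∩ X).card := by
  have hv' : v ∈ star a b ∩ X := mem_inter.mpr ⟨mem_star.mpr ⟨ha, hb⟩, hv⟩
  have herase : X.filter (fun w => (johnsonGraph 10 3).Adj v w ∧ a ∈ w.1 ∧ b ∈ w.1)
      = (star a b ∩ X).erase v := by
    ext w
    simp only [mem_filter, mem_erase, mem_inter, mem_star]
    constructor
    · rintro ⟨hwX, hadj, haw, hbw⟩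
      exact ⟨hadj.ne.symm, ⟨haw, hbw⟩, hwX⟩
    · rintro ⟨hne, ⟨haw, hbw⟩, hwX⟩
      exact ⟨hwX, johnsonGraph_three_adj_of_mem_of_mem hab ha hb haw hbw (Ne.symm hne), haw, hbw⟩
  rw [rowCount, herase, card_erase_add_one hv']

theorem card_star : ∀ a b : Fin 10, a ≠ b → (star a b).card = 8 := by
  decide

theorem rowCount_add_rowCount_add_rowCount (X : Finset {s : Finset (Fin 10) // s.card = 3})
    {v : {s : Finset (Fin 10) // s.card = 3}} {a b c : Fin 10}
    (habc : v.1 = {a, b, c}) (hab : a ≠ b) (hac : a ≠ c) (hbc : b ≠ c) :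
    rowCount X v a b + rowCount X v a c + rowCount X v b c
      = ((johnsonGraph 10 3).neighborFinset v ∩ X).card := by
  have hnbr : (johnsonGraph 10 3).neighborFinset v ∩ X
      = X.filter (fun w => (johnsonGraph 10 3).Adj v w) := by
    ext w
    rw [mem_inter, mem_filter, SimpleGraph.mem_neighborFinset, and_comm]
  have hrow : ∀ p q : Fin 10, rowCount X v p q =
      ∑ w ∈ X.filter (fun w => (johnsonGraph 10 3).Adj v w),
        (if p ∈ w.1 ∧ q ∈ w.1 then 1 else 0) := by
    intro p q
    rw [rowCount, ← card_filter, filter_filter]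
  rw [hnbr, hrow, hrow, hrow, ← sum_add_distrib, ← sum_add_distrib, card_eq_sum_ones]
  exact sum_congr rfl fun w hw =>
    johnsonGraph_three_adj_pair_indicator_sum habc hab hac hbc (mem_filter.mp hw).2

theorem multiset_eq_two_five_five {x y z : ℕ} (hx : x % 3 = 2) (hy : y % 3 = 2)
    (hz : z % 3 = 2) (hx7 : x ≤ 7) (hy7 : y ≤ 7) (hz7 : z ≤ 7) (hsum : x + y + z = 12) :
    ({x, y, z} : Multiset ℕ) = {2, 5, 5} := by
  obtain ⟨rfl, rfl, rfl⟩ | ⟨rfl, rfl, rfl⟩ | ⟨rfl, rfl, rfl⟩ :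
      (x = 2 ∧ y = 5 ∧ z = 5) ∨ (x = 5 ∧ y = 2 ∧ z = 5) ∨ (x = 5 ∧ y = 5 ∧ z = 2) := by omega
  all_goals decide

theorem type0_rowSums_J103
    (X1 X2 : Finset {s : Finset (Fin 10) // s.card = 3})
    (h : IsPerfect2Coloring (johnsonGraph 10 3) X1 X2 12 9 9 12)
    (htype : ∀ a b : Fin 10, a ≠ b → (star a b ∩ X1).card % 3 = 0)
    (v : {s : Finset (Fin 10) // s.card = 3}) (hv : v ∈ X1)
    (a b c : Fin 10) (habc : v.1 = {a, b, c})
    (hab : a ≠ b) (hac : a ≠ c) (hbc : b ≠ c) :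
    ({rowCount X1 v a b, rowCount X1 v a c, rowCount X1 v b c} : Multiset ℕ)
      = {2, 5, 5} := by
  have hsum : rowCount X1 v a b + rowCount X1 v a c + rowCount X1 v b c = 12 :=
    (rowCount_add_rowCount_add_rowCount X1 habc hab hac hbc).trans (h.2.2.2.2.1 v hv).1
  have hrow : ∀ p q : Fin 10, p ∈ v.1 → q ∈ v.1 → p ≠ q →
      rowCount X1 v p q % 3 = 2 ∧ rowCount X1 v p q ≤ 7 := by
    intro p q hp hq hpq
    have hadd := rowCount_add_one X1 hv hpq hp hq
    have hle : (star p q ∩ X1).card ≤ 8 := card_star p q hpq ▸ card_le_card inter_subset_left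
    have := htype p q hpq
    omega
  have hmem : a ∈ v.1 ∧ b ∈ v.1 ∧ c ∈ v.1 := by simp [habc]
  obtain ⟨hab3, hab7⟩ := hrow a b hmem.1 hmem.2.1 hab
  obtain ⟨hac3, hac7⟩ := hrow a c hmem.1 hmem.2.2 hac
  obtain ⟨hbc3, hbc7⟩ := hrow b c hmem.2.1 hmem.2.2 hbc
  exact multiset_eq_two_five_five hab3 hac3 hbc3 hab7 hac7 hbc7 hsum
end

section
/- The eigenvalues of the adjacency matrix of the Johnson graph J(n,k) are exactly the numbers θ_i = (k−i)(n−k−i) − i for i = 0, 1, ..., k. -/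
/-!
Let `W` be the inclusion matrix of `k`-sets versus `(k+1)`-sets. Counting common subsets and
common supersets gives `WᵀW = A(k+1) + (k+1)I` and `WWᵀ = A(k) + (n-k)I`. As `WᵀW` and `WWᵀ`
have the same nonzero eigenvalues, and `WᵀW` is singular when `C(n,k) < C(n,k+1)`, the
eigenvalues of `A(k+1)` are `-(k+1)` together with those of `A(k)` shifted by `n-2k-1`.
Induction from `A(0) = 0` gives the `θᵢ`; the argument works over any field.
-/

open Matrix Finset

namespace Module.End

variable {K V W : Type*} [Field K] [AddCommGroup V] [Module K V] [AddCommGroup W] [Module K W]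
  {f : V →ₗ[K] W} {g : W →ₗ[K] V} {μ : K}

theorem HasEigenvalue.comp_swap (hμ : μ ≠ 0) (h : HasEigenvalue (g ∘ₗ f) μ) :
    HasEigenvalue (f ∘ₗ g) μ := by
  obtain ⟨v, hv, hv0⟩ := h.exists_hasEigenvector
  have hgf : g (f v) = μ • v := mem_eigenspace_iff.1 hv
  refine hasEigenvalue_of_hasEigenvector (x := f v) ⟨mem_eigenspace_iff.2 ?_, fun hfv => ?_⟩
  · simp [hgf]
  · exact smul_ne_zero hμ hv0 (by rw [← hgf, hfv, map_zero])

theorem hasEigenvalue_comp_comm (hμ : μ ≠ 0) :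
    HasEigenvalue (g ∘ₗ f) μ ↔ HasEigenvalue (f ∘ₗ g) μ :=
  ⟨.comp_swap hμ, .comp_swap hμ⟩

theorem hasEigenvalue_zero_comp_of_finrank_lt [FiniteDimensional K V] [FiniteDimensional K W]
    (f : V →ₗ[K] W) (g : W →ₗ[K] V) (h : finrank K W < finrank K V) :
    HasEigenvalue (g ∘ₗ f) 0 := by
  rw [hasEigenvalue_iff, eigenspace_zero]
  exact ne_bot_of_le_ne_bot (LinearMap.ker_ne_bot_of_finrank_lt h) (LinearMap.ker_le_ker_comp f g)

end Module.End

namespace Matrix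

open Module.End

variable {m : Type*} [Fintype m] [DecidableEq m] {R : Type*} [CommRing R]

theorem hasEigenvalue_toLin'_iff (A : Matrix m m R) (μ : R) :
    HasEigenvalue (toLin' A) μ ↔ ∃ v, v ≠ 0 ∧ A *ᵥ v = μ • v := by
  simp only [hasEigenvalue_iff, Submodule.ne_bot_iff, mem_eigenspace_iff, toLin'_apply, and_comm]

theorem hasEigenvalue_toLin'_add_smul_one_iff (A : Matrix m m R) (c μ : R) :
    HasEigenvalue (toLin' (A + c • 1)) μ ↔ HasEigenvalue (toLin' A) (μ - c) := by
  rw [map_add, map_smul, toLin'_one, hasEigenvalue_add_iff]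

theorem hasEigenvalue_toLin'_zero_iff [Nonempty m] [IsDomain R] (μ : R) :
    HasEigenvalue (toLin' (0 : Matrix m m R)) μ ↔ μ = 0 := by
  rw [hasEigenvalue_toLin'_iff]
  constructor
  · rintro ⟨v, hv, h⟩
    rw [zero_mulVec] at h
    exact (smul_eq_zero.1 h.symm).resolve_right hv
  · rintro rfl
    exact ⟨1, one_ne_zero, by simp⟩

end Matrix

namespace Finset

variable {α : Type*}

theorem card_inter_lt_of_card_eq_of_ne_s19 [DecidableEq α] {s t : Finset α} (h : #s = #t)
    (hne : s ≠ t) : #(s ∩ t) < #s :=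
  card_lt_card ⟨inter_subset_left, fun hs =>
    hne (eq_of_subset_of_card_le (fun _ ha => (mem_inter.1 (hs ha)).2) h.ge)⟩

variable [Fintype α]

theorem card_filter_subtype_val (p q : α → Prop) [DecidablePred p] [DecidablePred q] :
    #{x : {a // p a} | q x.1} = #{a | p a ∧ q a} := by
  simp only [← Fintype.card_subtype]
  exact Fintype.card_congr (Equiv.subtypeSubtypeEquivSubtypeInter p q)

variable [DecidableEq α]

theorem card_filter_card_eq_and_subset (k : ℕ) (u : Finset α) :
    #{s | #s = k ∧ s ⊆ u} = (#u).choose k := by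
  rw [← card_powersetCard]
  congr 1
  ext s
  simp [mem_powersetCard, and_comm]

theorem card_filter_card_eq_and_superset {m : ℕ} {u : Finset α} (hu : #u ≤ m) :
    #{s | #s = m ∧ u ⊆ s} = (Fintype.card α - #u).choose (m - #u) := by
  rw [← card_compl, ← card_powersetCard]
  refine card_nbij' (· \ u) (· ∪ u) ?_ ?_ ?_ ?_
  · intro s hs
    simp_all [mem_powersetCard, card_sdiff_of_subset]
  · intro w hw
    obtain ⟨hwu, hw⟩ := mem_powersetCard.1 hw
    simp [card_union_of_disjoint (subset_compl_iff_disjoint_right.1 hwu), hw, hu]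
  · intro s hs
    simp_all
  · intro w hw
    exact union_sdiff_cancel_right (subset_compl_iff_disjoint_right.1 (mem_powersetCard.1 hw).1)

end Finset

theorem Nat.choose_lt_choose_succ_of_two_mul_lt {n k : ℕ} (h : 2 * k + 1 < n) :
    n.choose k < n.choose (k + 1) := by
  have hpos : 0 < n.choose k := Nat.choose_pos (by omega)
  refine Nat.lt_of_mul_lt_mul_right (a := k + 1) ?_
  rw [Nat.choose_succ_right_eq]
  exact Nat.mul_lt_mul_of_pos_left (by omega) hpos

namespace Johnson

abbrev Vertex (n k : ℕ) := {s : Finset (Fin n) // #s = k}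

section Incidence

variable (R : Type*) [Ring R] (n k : ℕ)

def incidence : Matrix (Vertex n k) (Vertex n (k + 1)) R :=
  of fun t s => if t.1 ⊆ s.1 then 1 else 0

variable {n k}

theorem incidence_transpose_mul_apply (s s' : Vertex n (k + 1)) :
    ((incidence R n k)ᵀ * incidence R n k) s s' = (#(s.1 ∩ s'.1)).choose k := by
  simp only [mul_apply, transpose_apply, incidence, of_apply, ite_zero_mul_ite_zero, mul_one,
    ← subset_inter_iff, sum_boole]
  rw [card_filter_subtype_val (fun t => #t = k) (· ⊆ s.1 ∩ s'.1),
    card_filter_card_eq_and_subset]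

theorem incidence_mul_transpose_apply (t t' : Vertex n k) :
    (incidence R n k * (incidence R n k)ᵀ) t t' =
      #{s : Vertex n (k + 1) | t.1 ∪ t'.1 ⊆ s.1} := by
  simp only [mul_apply, transpose_apply, incidence, of_apply, ite_zero_mul_ite_zero, mul_one,
    ← union_subset_iff, sum_boole]

theorem incidence_transpose_mul :
    (incidence R n k)ᵀ * incidence R n k =
      (johnsonGraph n (k + 1)).adjMatrix R + (k + 1 : R) • 1 := by
  ext s s'
  rw [incidence_transpose_mul_apply]
  by_cases h : s = s'
  · subst h
    simp [s.2]
  · have hlt := card_inter_lt_of_card_eq_of_ne_s19 (s.2.trans s'.2.symm) (Subtype.coe_ne_coe.2 h)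
    rw [s.2] at hlt
    rw [Matrix.add_apply, Matrix.smul_apply, one_apply_ne h, smul_zero, add_zero,
      SimpleGraph.adjMatrix_apply]
    by_cases hadj : (johnsonGraph n (k + 1)).Adj s s'
    · rw [if_pos hadj, hadj.1, Nat.add_sub_cancel, Nat.choose_self, Nat.cast_one]
    · have hne : #(s.1 ∩ s'.1) ≠ k := fun he => hadj ⟨he, h⟩
      rw [if_neg hadj, Nat.choose_eq_zero_of_lt (by omega), Nat.cast_zero]

theorem incidence_mul_transpose (hkn : k ≤ n) :
    incidence R n k * (incidence R n k)ᵀ =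
      (johnsonGraph n k).adjMatrix R + ((n : R) - k) • 1 := by
  ext t t'
  rw [incidence_mul_transpose_apply,
    card_filter_subtype_val (fun s => #s = k + 1) (t.1 ∪ t'.1 ⊆ ·)]
  by_cases h : t = t'
  · subst h
    rw [union_self, card_filter_card_eq_and_superset (by omega), t.2]
    simp [hkn]
  · have hlt := card_inter_lt_of_card_eq_of_ne_s19 (t.2.trans t'.2.symm) (Subtype.coe_ne_coe.2 h)
    have hsum := card_union_add_card_inter t.1 t'.1
    rw [t.2] at hlt hsum
    rw [t'.2] at hsum
    rw [Matrix.add_apply, Matrix.smul_apply, one_apply_ne h, smul_zero, add_zero,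
      SimpleGraph.adjMatrix_apply]
    by_cases hadj : (johnsonGraph n k).Adj t t'
    · have hunion : #(t.1 ∪ t'.1) = k + 1 := by have := hadj.1; omega
      rw [if_pos hadj, card_filter_card_eq_and_superset hunion.le, hunion]
      simp
    · have hne : #(t.1 ∩ t'.1) ≠ k - 1 := fun he => hadj ⟨he, h⟩
      rw [if_neg hadj, filter_eq_empty_iff.2, card_empty, Nat.cast_zero]
      rintro s - ⟨hs, hsub⟩
      have := card_le_card hsub
      omega

end Incidence

section Eigenvalues

open Module Module.End

variable {K : Type*} [Field K] {n k : ℕ}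

theorem hasEigenvalue_adjMatrix_succ_iff (h : 2 * k + 1 < n) (x : K) :
    HasEigenvalue (toLin' ((johnsonGraph n (k + 1)).adjMatrix K)) x ↔
      x + (k + 1) = 0 ∨
        HasEigenvalue (toLin' ((johnsonGraph n k).adjMatrix K)) (x + (k + 1) - (n - k)) := by
  have h_succ : HasEigenvalue (toLin' ((johnsonGraph n (k + 1)).adjMatrix K)) x ↔
      HasEigenvalue (toLin' ((incidence K n k)ᵀ * incidence K n k)) (x + (k + 1)) := by
    rw [incidence_transpose_mul, hasEigenvalue_toLin'_add_smul_one_iff, add_sub_cancel_right]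
  have h_prev : HasEigenvalue (toLin' ((johnsonGraph n k).adjMatrix K))
      (x + (k + 1) - (n - k)) ↔
      HasEigenvalue (toLin' (incidence K n k * (incidence K n k)ᵀ)) (x + (k + 1)) := by
    rw [incidence_mul_transpose K (by omega), hasEigenvalue_toLin'_add_smul_one_iff]
  rw [h_succ, h_prev, toLin'_mul, toLin'_mul]
  by_cases hx : x + (k + 1) = 0
  · simp only [hx, true_or, iff_true]
    refine hasEigenvalue_zero_comp_of_finrank_lt _ _ ?_
    simpa [Fintype.card_finset_len] using Nat.choose_lt_choose_succ_of_two_mul_lt h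
  · simp only [hx, false_or]
    exact hasEigenvalue_comp_comm hx

theorem hasEigenvalue_adjMatrix_iff (h : 2 * k ≤ n) (x : K) :
    HasEigenvalue (toLin' ((johnsonGraph n k).adjMatrix K)) x ↔
      ∃ i ≤ k, x = ((k : K) - i) * ((n : K) - k - i) - i := by
  induction k generalizing x with
  | zero =>
    have : Nonempty (Vertex n 0) := ⟨⟨∅, card_empty⟩⟩
    have h_adj : (johnsonGraph n 0).adjMatrix K = 0 := by
      ext s t
      rw [SimpleGraph.adjMatrix_apply, if_neg fun hadj => hadj.2 <| Subtype.ext <| by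
        rw [card_eq_zero.1 s.2, card_eq_zero.1 t.2]]
      rfl
    rw [h_adj, hasEigenvalue_toLin'_zero_iff]
    simp
  | succ k ih =>
    rw [hasEigenvalue_adjMatrix_succ_iff (by omega), ih (by omega)]
    simp only [Nat.le_add_one_iff, or_and_right, exists_or, exists_eq_left, or_comm]
    refine or_congr ?_ (exists_congr fun i => and_congr_right fun _ => ?_) <;>
    · push_cast
      constructor <;> intro hx <;> linear_combination hx

end Eigenvalues

end Johnson

theorem johnson_eigenvalues_general (n k : ℕ) (hkn : 2 * k ≤ n) (x : ℝ) :
    (∃ v : {s : Finset (Fin n) // s.card = k} → ℝ, v ≠ 0 ∧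
        (johnsonGraph n k).adjMatrix ℝ *ᵥ v = x • v) ↔
      ∃ i : ℕ, i ≤ k ∧
        x = ((k : ℝ) - i) * ((n : ℝ) - (k : ℝ) - i) - i := by
  rw [← hasEigenvalue_toLin'_iff]
  exact Johnson.hasEigenvalue_adjMatrix_iff hkn x

/-- The eigenvalues of the adjacency matrix of the Johnson graph `J(n,k)` are
exactly the numbers `θᵢ = (k-i)(n-k-i) - i` for `i = 0, 1, …, k`. -/
theorem johnson_eigenvalues (n k : ℕ) (hk : 0 < k) (hkn : 2 * k ≤ n) (x : ℝ) :
    (∃ v : {s : Finset (Fin n) // s.card = k} → ℝ, v ≠ 0 ∧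
        (johnsonGraph n k).adjMatrix ℝ *ᵥ v = x • v) ↔
      ∃ i : ℕ, i ≤ k ∧
        x = ((k : ℝ) - i) * ((n : ℝ) - (k : ℝ) - i) - i :=
  johnson_eigenvalues_general n k hkn x
end
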